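/- Let 0 < α < 1 and let f : [a,b] → ℝ be continuous with f(a) = 0 such that t ↦ ∫_a^t (t−s)^{−α} f(s) ds is differentiable on (a,b). If f ≥ 0 on [a,b] and f is nondecreasing, then (aD_t^α f)(t) ≥ 0 for all t ∈ (a,b). -/
import Mathlib

/-- Left Riemann–Liouville fractional derivative of order `α` (for `0 < α < 1`)
with base point `a`. -/
noncomputable def RLderiv (α a : ℝ) (f : ℝ → ℝ) (t : ℝ) : ℝ :=
  (1 / Real.Gamma (1 - α)) *
    deriv (fun τ : ℝ => ∫ s in a..τ, (τ - s) ^ (-α) * (f s - f a)) t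

/-- The RL fractional derivative of a nonnegative nondecreasing continuous
function vanishing at the base point is nonnegative. -/
theorem rl_deriv_nonneg (α a b : ℝ) (hα0 : 0 < α) (hα1 : α < 1) (hab : a < b)
    (f : ℝ → ℝ) (hfc : ContinuousOn f (Set.Icc a b)) (hfa : f a = 0)
    (hdiff : ∀ t ∈ Set.Ioo a b,
      DifferentiableAt ℝ (fun τ : ℝ => ∫ s in a..τ, (τ - s) ^ (-α) * (f s - f a)) t)
    (hpos : ∀ t ∈ Set.Icc a b, 0 ≤ f t)
    (hmono : MonotoneOn f (Set.Icc a b)) :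
    ∀ t ∈ Set.Ioo a b, 0 ≤ RLderiv α a f t := by
  intro t ht
  obtain ⟨hta, htb⟩ := ht
  set F : ℝ → ℝ := fun τ : ℝ => ∫ s in a..τ, (τ - s) ^ (-α) * (f s - f a) with hF
  -- rewrite F via substitution u = τ - s
  have hFeq : ∀ τ, F τ = ∫ u in (0:ℝ)..(τ - a), u ^ (-α) * f (τ - u) := by
    intro τ
    have := intervalIntegral.integral_comp_sub_left
      (fun u : ℝ => u ^ (-α) * f (τ - u)) τ (a := a) (b := τ)
    simp only [sub_self] at this
    rw [hF]
    simp only [hfa, sub_zero]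
    rw [← this]
    congr 1
    ext s
    congr 2
    ring
  -- integrability of the integrand
  have hInt : ∀ τ ∈ Set.Icc a b, ∀ c d, c ∈ Set.Icc (0:ℝ) (τ - a) →
      d ∈ Set.Icc (0:ℝ) (τ - a) →
      IntervalIntegrable (fun u => u ^ (-α) * f (τ - u)) MeasureTheory.volume c d := by
    intro τ hτ c d hc hd
    have h1 : IntervalIntegrable (fun u : ℝ => u ^ (-α)) MeasureTheory.volume c d :=
      intervalIntegral.intervalIntegrable_rpow' (by linarith)
    refine h1.mul_continuousOn ?_
    have hsub : Set.uIcc c d ⊆ Set.Icc (0:ℝ) (τ - a) := Set.uIcc_subset_Icc hc hd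
    have : ContinuousOn (fun u : ℝ => τ - u) (Set.uIcc c d) :=
      (continuous_const.sub continuous_id).continuousOn
    refine hfc.comp this ?_
    intro u hu
    have hu' := hsub hu
    constructor <;> [linarith [hu'.2]; linarith [hu'.1, hτ.2]]
  -- nonnegativity of the integrand pointwise
  have hnn : ∀ τ ∈ Set.Icc a b, ∀ u ∈ Set.Icc (0:ℝ) (τ - a),
      0 ≤ u ^ (-α) * f (τ - u) := by
    intro τ hτ u hu
    refine mul_nonneg (Real.rpow_nonneg hu.1 _) (hpos _ ?_)
    constructor <;> [linarith [hu.2]; linarith [hu.1, hτ.2]]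
  -- monotonicity of F on Icc a b
  have hFmono : ∀ t₁ ∈ Set.Icc a b, ∀ t₂ ∈ Set.Icc a b, t₁ ≤ t₂ → F t₁ ≤ F t₂ := by
    intro t₁ h₁ t₂ h₂ h12
    rw [hFeq, hFeq]
    have hc1 : (0:ℝ) ≤ t₁ - a := by linarith [h₁.1]
    have hc2 : t₁ - a ≤ t₂ - a := by linarith
    have i1 : IntervalIntegrable (fun u => u ^ (-α) * f (t₂ - u)) MeasureTheory.volume 0 (t₁ - a) :=
      hInt t₂ h₂ 0 (t₁ - a) ⟨le_refl _, by linarith⟩ ⟨hc1, by linarith⟩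
    have i2 : IntervalIntegrable (fun u => u ^ (-α) * f (t₂ - u)) MeasureTheory.volume (t₁ - a) (t₂ - a) :=
      hInt t₂ h₂ (t₁ - a) (t₂ - a) ⟨hc1, by linarith⟩ ⟨by linarith, le_refl _⟩
    have i3 : IntervalIntegrable (fun u => u ^ (-α) * f (t₁ - u)) MeasureTheory.volume 0 (t₁ - a) :=
      hInt t₁ h₁ 0 (t₁ - a) ⟨le_refl _, hc1⟩ ⟨hc1, le_refl _⟩
    have hsplit :
        (∫ u in (0:ℝ)..(t₂ - a), u ^ (-α) * f (t₂ - u))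
          = (∫ u in (0:ℝ)..(t₁ - a), u ^ (-α) * f (t₂ - u))
            + ∫ u in (t₁ - a)..(t₂ - a), u ^ (-α) * f (t₂ - u) :=
      (intervalIntegral.integral_add_adjacent_intervals i1 i2).symm
    rw [hsplit]
    have hA : (∫ u in (0:ℝ)..(t₁ - a), u ^ (-α) * f (t₁ - u))
        ≤ ∫ u in (0:ℝ)..(t₁ - a), u ^ (-α) * f (t₂ - u) := by
      refine intervalIntegral.integral_mono_on hc1 i3 i1 ?_
      intro u hu
      have hmem1 : t₁ - u ∈ Set.Icc a b := ⟨by linarith [hu.2], by linarith [hu.1, h₁.2]⟩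
      have hmem2 : t₂ - u ∈ Set.Icc a b := ⟨by linarith [hu.2], by linarith [hu.1, h₂.2]⟩
      have := hmono hmem1 hmem2 (by linarith)
      exact mul_le_mul_of_nonneg_left this (Real.rpow_nonneg hu.1 _)
    have hB : (0:ℝ) ≤ ∫ u in (t₁ - a)..(t₂ - a), u ^ (-α) * f (t₂ - u) := by
      refine intervalIntegral.integral_nonneg hc2 ?_
      intro u hu
      exact hnn t₂ h₂ u ⟨by linarith [hu.1], by linarith [hu.2]⟩
    linarith
  -- deriv F t ≥ 0 via right slopes
  have hd : HasDerivAt F (deriv F t) t := (hdiff t ⟨hta, htb⟩).hasDerivAt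
  have hslope : Filter.Tendsto (slope F t) (nhdsWithin t (Set.Ioi t)) (nhds (deriv F t)) :=
    (hasDerivAt_iff_tendsto_slope.mp hd).mono_left
      (nhdsWithin_mono t fun x hx => ne_of_gt hx)
  have hderiv_nonneg : 0 ≤ deriv F t := by
    refine ge_of_tendsto hslope ?_
    filter_upwards [Ioo_mem_nhdsGT_of_mem (Set.mem_Ico.mpr ⟨le_refl t, htb⟩)] with x hx
    have hxt : t < x := hx.1
    have hle : F t ≤ F x := hFmono t ⟨le_of_lt hta, le_of_lt htb⟩ x
      ⟨by linarith, le_of_lt hx.2⟩ (le_of_lt hxt)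
    rw [slope_def_field]
    exact div_nonneg (by linarith) (by linarith)
  have hΓ : 0 < Real.Gamma (1 - α) := Real.Gamma_pos_of_pos (by linarith)
  unfold RLderiv
  exact mul_nonneg (by positivity) hderiv_nonneg
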